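/- Let Ω ⊆ ℝ³ be an open set, let ρ : Ω → ℝ be a harmonic function (Δρ = 0), and let f : Ω → ℂ be a nonvanishing scalar C² function with ∇f × ∇ρ = 0 in Ω. If φ : Ω → ℂ is a C² scalar function with ∇φ = ∇ρ/f², then ψ := f·φ is a solution of the stationary Schrödinger equation (−Δ + q)ψ = 0 in Ω, where q = Δf/f. -/

import Mathlib

open Quaternion

noncomputable section

/-- Points of ℝ³. -/
abbrev P3 := EuclideanSpace ℝ (Fin 3)

/-- Partial derivative ∂ₖ of a complex-valued function on ℝ³. -/
def pd (k : Fin 3) (F : P3 → ℂ) : P3 → ℂ :=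
  fun p => fderiv ℝ F p (EuclideanSpace.single k 1)

/-- The Laplacian Δ = ∂₁² + ∂₂² + ∂₃². -/
def lap3 (F : P3 → ℂ) : P3 → ℂ := fun p => ∑ k : Fin 3, pd k (pd k F) p

/-- Embedding of a complex scalar as a quaternion. -/
def qC (z : ℂ) : ℍ[ℂ] := ⟨z, 0, 0, 0⟩

/-- The quaternionic imaginary units e₁, e₂, e₃. -/
def qe : Fin 3 → ℍ[ℂ] := ![⟨0,1,0,0⟩, ⟨0,0,1,0⟩, ⟨0,0,0,1⟩]

/-- The eₖ-components of a quaternion. -/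
def qcomp : Fin 3 → ℍ[ℂ] → ℂ := ![QuaternionAlgebra.imI, QuaternionAlgebra.imJ, QuaternionAlgebra.imK]

/-- Quaternionic conjugation C_H. -/
def CH (q : ℍ[ℂ]) : ℍ[ℂ] := ⟨q.re, -q.imI, -q.imJ, -q.imK⟩

/-- Componentwise partial derivative of a quaternion-valued function. -/
def pdq (k : Fin 3) (W : P3 → ℍ[ℂ]) : P3 → ℍ[ℂ] :=
  fun p => ⟨pd k (fun x => (W x).re) p, pd k (fun x => (W x).imI) p,
            pd k (fun x => (W x).imJ) p, pd k (fun x => (W x).imK) p⟩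

/-- The Dirac (Moisil–Theodorescu) operator D Q = Σₖ eₖ ∂ₖ Q. -/
def Dq (W : P3 → ℍ[ℂ]) : P3 → ℍ[ℂ] := fun p => ∑ k : Fin 3, qe k * pdq k W p

/-- The right Dirac operator Dᵣ Q = Σₖ (∂ₖ Q) eₖ. -/
def Drq (W : P3 → ℍ[ℂ]) : P3 → ℍ[ℂ] := fun p => ∑ k : Fin 3, pdq k W p * qe k

/-- Gradient of a scalar function viewed as a purely vectorial quaternion. -/
def gradq (F : P3 → ℂ) : P3 → ℍ[ℂ] := fun p => ⟨0, pd 0 F p, pd 1 F p, pd 2 F p⟩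

/-- Divergence of (the vector part of) a quaternion-valued function. -/
def divq (W : P3 → ℍ[ℂ]) : P3 → ℂ :=
  fun p => pd 0 (fun x => (W x).imI) p + pd 1 (fun x => (W x).imJ) p + pd 2 (fun x => (W x).imK) p

/-- Rotor (curl) of (the vector part of) a quaternion-valued function. -/
def rotq (W : P3 → ℍ[ℂ]) : P3 → ℍ[ℂ] :=
  fun p => ⟨0,
    pd 1 (fun x => (W x).imK) p - pd 2 (fun x => (W x).imJ) p,
    pd 2 (fun x => (W x).imI) p - pd 0 (fun x => (W x).imK) p,
    pd 0 (fun x => (W x).imJ) p - pd 1 (fun x => (W x).imI) p⟩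

/-- Cross product of the vector parts of two quaternions. -/
def crossq (u v : ℍ[ℂ]) : ℍ[ℂ] :=
  ⟨0, u.imJ * v.imK - u.imK * v.imJ, u.imK * v.imI - u.imI * v.imK, u.imI * v.imJ - u.imJ * v.imI⟩

/-- Bilinear scalar product of the vector parts of two quaternions. -/
def dotq (u v : ℍ[ℂ]) : ℂ := u.imI * v.imI + u.imJ * v.imJ + u.imK * v.imK

/-- `Cⁿ` smoothness of a quaternion-valued function on a set, componentwise. -/
def QContDiffOn (n : ℕ) (W : P3 → ℍ[ℂ]) (Ω : Set P3) : Prop :=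
  ContDiffOn ℝ n (fun p => (W p).re) Ω ∧ ContDiffOn ℝ n (fun p => (W p).imI) Ω ∧
  ContDiffOn ℝ n (fun p => (W p).imJ) Ω ∧ ContDiffOn ℝ n (fun p => (W p).imK) Ω

/-- The pure-quaternion Df/f built from a nonvanishing scalar function f. -/
def DfF (f : P3 → ℂ) : P3 → ℍ[ℂ] := fun p => (f p)⁻¹ • gradq f p

/-!
Write `ψ = f φ`. The product rule gives `Δψ = (Δf) φ + (2 ∇f·∇φ + f Δφ)`, while
`∇ρ = f² ∇φ` gives `0 = Δρ = div (f² ∇φ) = f (2 ∇f·∇φ + f Δφ)`. As `f ≠ 0`, the bracket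
vanishes, so `Δψ = (Δf / f) ψ`.
-/

open Filter Topology

section

variable {f g φ ρ : P3 → ℂ} {p : P3}

lemma ContDiffAt.differentiableAt_pd (hf : ContDiffAt ℝ 2 f p) (k : Fin 3) :
    DifferentiableAt ℝ (pd k f) p :=
  ((hf.fderiv_right (m := 1) (by norm_num)).clm_apply contDiffAt_const).differentiableAt
    one_ne_zero

lemma Filter.EventuallyEq.pd_eq (h : f =ᶠ[𝓝 p] g) (k : Fin 3) : pd k f p = pd k g p := by
  simp only [pd, h.fderiv_eq]

lemma pd_add (hf : DifferentiableAt ℝ f p) (hg : DifferentiableAt ℝ g p) (k : Fin 3) :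
    pd k (fun x => f x + g x) p = pd k f p + pd k g p := by
  simp [pd, fderiv_fun_add hf hg]

lemma pd_mul (hf : DifferentiableAt ℝ f p) (hg : DifferentiableAt ℝ g p) (k : Fin 3) :
    pd k (fun x => f x * g x) p = pd k f p * g p + f p * pd k g p := by
  simp only [pd, fderiv_fun_mul hf hg]
  simp only [add_apply, smul_apply, smul_eq_mul]
  ring

lemma pd_pd_mul (hf : ContDiffAt ℝ 2 f p) (hg : ContDiffAt ℝ 2 g p) (k : Fin 3) :
    pd k (pd k (fun x => f x * g x)) p
      = pd k (pd k f) p * g p + 2 * (pd k f p * pd k g p) + f p * pd k (pd k g) p := by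
  have hf' : ∀ᶠ x in 𝓝 p, DifferentiableAt ℝ f x :=
    (hf.eventually (by simp)).mono fun x hx => hx.differentiableAt (by norm_num)
  have hg' : ∀ᶠ x in 𝓝 p, DifferentiableAt ℝ g x :=
    (hg.eventually (by simp)).mono fun x hx => hx.differentiableAt (by norm_num)
  have hpdf := hf.differentiableAt_pd k
  have hpdg := hg.differentiableAt_pd k
  have hfirst : pd k (fun x => f x * g x) =ᶠ[𝓝 p] fun x => pd k f x * g x + f x * pd k g x :=
    (hf'.and hg').mono fun x hx => pd_mul hx.1 hx.2 k
  rw [hfirst.pd_eq, pd_add (hpdf.fun_mul hg'.self_of_nhds) (hf'.self_of_nhds.fun_mul hpdg),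
    pd_mul hpdf hg'.self_of_nhds, pd_mul hf'.self_of_nhds hpdg]
  ring

lemma lap3_mul (hf : ContDiffAt ℝ 2 f p) (hg : ContDiffAt ℝ 2 g p) :
    lap3 (fun x => f x * g x) p
      = lap3 f p * g p + (2 * ∑ k, pd k f p * pd k g p + f p * lap3 g p) := by
  simp only [lap3, pd_pd_mul hf hg, Finset.sum_add_distrib, Finset.sum_mul, Finset.mul_sum]
  ring

lemma lap3_of_pd_eq_mul_pd (hg : ContDiffAt ℝ 1 g p) (hφ : ContDiffAt ℝ 2 φ p)
    (hρ : ∀ᶠ x in 𝓝 p, ∀ k, pd k ρ x = g x * pd k φ x) :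
    lap3 ρ p = ∑ k, pd k g p * pd k φ p + g p * lap3 φ p := by
  have hdiv : ∀ k, pd k (pd k ρ) p = pd k g p * pd k φ p + g p * pd k (pd k φ) p := fun k => by
    have hk : pd k ρ =ᶠ[𝓝 p] fun x => g x * pd k φ x := hρ.mono fun x hx => hx k
    rw [hk.pd_eq, pd_mul (hg.differentiableAt one_ne_zero) (hφ.differentiableAt_pd k)]
  simp only [lap3, hdiv, Finset.sum_add_distrib, Finset.mul_sum]

lemma pd_eq_mul_of_gradq_eq_smul {F G : P3 → ℂ} {c : ℂ} (h : gradq F p = c • gradq G p)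
    (k : Fin 3) : pd k F p = c * pd k G p := by
  fin_cases k
  · exact congrArg QuaternionAlgebra.imI h
  · exact congrArg QuaternionAlgebra.imJ h
  · exact congrArg QuaternionAlgebra.imK h

end

theorem statement19_general (Ω : Set P3) (hΩ : IsOpen Ω)
    (ρ : P3 → ℝ)
    (hharm : ∀ p ∈ Ω, lap3 (fun x => (ρ x : ℂ)) p = 0)
    (f : P3 → ℂ) (hf : ContDiffOn ℝ 2 f Ω) (hf0 : ∀ p ∈ Ω, f p ≠ 0)
    (φ : P3 → ℂ) (hφ : ContDiffOn ℝ 2 φ Ω)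
    (hgrad : ∀ p ∈ Ω, gradq φ p = ((f p) ^ 2)⁻¹ • gradq (fun x => (ρ x : ℂ)) p) :
    ∀ p ∈ Ω,
      -(lap3 (fun x => f x * φ x) p)
        + (lap3 f p / f p) * (f p * φ p) = 0 := by
  intro p hp
  have hfp : ContDiffAt ℝ 2 f p := hf.contDiffAt (hΩ.mem_nhds hp)
  have hφp : ContDiffAt ℝ 2 φ p := hφ.contDiffAt (hΩ.mem_nhds hp)
  have hρ : ∀ᶠ x in 𝓝 p, ∀ k, pd k (fun x => (ρ x : ℂ)) x = f x * f x * pd k φ x :=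
    eventually_of_mem (hΩ.mem_nhds hp) fun x hx k => by
      rw [pd_eq_mul_of_gradq_eq_smul (hgrad x hx) k]
      field_simp [hf0 x hx]
  have hdf : DifferentiableAt ℝ f p := hfp.differentiableAt two_ne_zero
  have hbracket : 2 * ∑ k, pd k f p * pd k φ p + f p * lap3 φ p = 0 := by
    have h := hharm p hp
    rw [lap3_of_pd_eq_mul_pd ((hfp.mul hfp).of_le (by norm_num)) hφp hρ] at h
    simp only [pd_mul hdf hdf, Fin.sum_univ_three] at h ⊢
    apply mul_left_cancel₀ (hf0 p hp)
    linear_combination h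
  rw [lap3_mul hfp hφp, hbracket]
  field_simp [hf0 p hp]
  ring

/-- if ρ is harmonic, ∇f × ∇ρ = 0, and φ is a scalar potential with
    ∇φ = ∇ρ/f², then ψ = fφ solves the Schrödinger equation (−Δ + q)ψ = 0 with
    q = Δf/f. -/
theorem statement19 (Ω : Set P3) (hΩ : IsOpen Ω)
    (ρ : P3 → ℝ) (hρ : ContDiffOn ℝ 2 ρ Ω)
    (hharm : ∀ p ∈ Ω, lap3 (fun x => (ρ x : ℂ)) p = 0)
    (f : P3 → ℂ) (hf : ContDiffOn ℝ 2 f Ω) (hf0 : ∀ p ∈ Ω, f p ≠ 0)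
    (hpar : ∀ p ∈ Ω, crossq (gradq f p) (gradq (fun x => (ρ x : ℂ)) p) = 0)
    (φ : P3 → ℂ) (hφ : ContDiffOn ℝ 2 φ Ω)
    (hgrad : ∀ p ∈ Ω, gradq φ p = ((f p) ^ 2)⁻¹ • gradq (fun x => (ρ x : ℂ)) p) :
    ∀ p ∈ Ω,
      -(lap3 (fun x => f x * φ x) p)
        + (lap3 f p / f p) * (f p * φ p) = 0 :=
  statement19_general Ω hΩ ρ hharm f hf hf0 φ hφ hgrad
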